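/- For every ω=(ω₂,ω₃)∈ℝ² and all constants φ̄, S̄⁺, S̄⁻∈ℝ, the time-independent functions φ(t,x′):=φ̄·cos(ω₂x₂+ω₃x₃) and U±(t,x):=(0,0,0,0,0,0,0, S̄±·cos(ω₂x₂+ω₃x₃)) solve the homogeneous constant-coefficient problem: they satisfy Â₀±∂_tU± ± Â₁∂₁U± + Â₂∂₂U± + Â₃∂₃U± = 0 in ℝ×ℝ³₊ and the boundary conditions [p]=0, [v]=0, [H₂]=0, [H₃]=0 and ∂_tφ − v₁⁺|_{x₁=0} = 0. In particular, if (φ̄,S̄⁺,S̄⁻)≠0 the homogeneous problem admits nonzero bounded solutions (neutral modes associated with the non-elliptic front symbol). -/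

import Mathlib

noncomputable section
open MeasureTheory

/-- Spatial points `x = (x₁,x₂,x₃)`. -/
abbrev X3 : Type := ℝ × ℝ × ℝ
/-- Space-time points `(t, x)`. -/
abbrev P3 : Type := ℝ × X3

/-- Directional derivative. -/
def D {E : Type*} [NormedAddCommGroup E] [NormedSpace ℝ E]
    (v : P3) (f : P3 → E) (p : P3) : E := fderiv ℝ f p v

def vIdx (i : Fin 3) : Fin 8 := ⟨1 + i.1, by omega⟩
def hIdx (i : Fin 3) : Fin 8 := ⟨4 + i.1, by omega⟩

/-- The unique symmetric 8×8 matrix `Â_j` with quadratic form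
`(Â_jU,U) = 2(v_j(p + (Ĥ,H)) − Ĥ_j(v,H))` on `U = (p,v,H,S)`. -/
def Ahat (Hh : Fin 3 → ℝ) (j : Fin 3) : Matrix (Fin 8) (Fin 8) ℝ :=
  Matrix.single 0 (vIdx j) 1 + Matrix.single (vIdx j) 0 1
    + ∑ k : Fin 3, (Matrix.single (vIdx j) (hIdx k) (Hh k)
        + Matrix.single (hIdx k) (vIdx j) (Hh k))
    - ∑ k : Fin 3, (Matrix.single (vIdx k) (hIdx k) (Hh j)
        + Matrix.single (hIdx k) (vIdx k) (Hh j))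

/-- `Â₀` for density `ρ̂` and sound speed `ĉ`. -/
def A0hat (ρ c : ℝ) : Matrix (Fin 8) (Fin 8) ℝ :=
  Matrix.diagonal ![1 / (ρ * c ^ 2), ρ, ρ, ρ, 1, 1, 1, 1]

/-- The neutral-mode entropy/front solution. -/
def Uosc (Sb ω₂ ω₃ : ℝ) : P3 → Fin 8 → ℝ := fun p i =>
  if i = 7 then Sb * Real.cos (ω₂ * p.2.2.1 + ω₃ * p.2.2.2) else 0

def φosc (φb ω₂ ω₃ : ℝ) : ℝ × ℝ × ℝ → ℝ := fun q =>
  φb * Real.cos (ω₂ * q.2.1 + ω₃ * q.2.2)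

/-! The entropy `S` is a characteristic unknown: the last column of every flux matrix `Â_j`
vanishes, so `Â_j` annihilates every derivative of a state whose only nonzero component is `S`,
and `Â₀∂ₜU = 0` because `U` is time-independent. With `p = v = H = 0` all jump conditions hold
trivially and the front equation reduces to `∂ₜφ = 0`. -/

section Calculus

variable {𝕜 : Type*} [NontriviallyNormedField 𝕜]
  {E : Type*} [NormedAddCommGroup E] [NormedSpace 𝕜 E]
  {F : Type*} [NormedAddCommGroup F] [NormedSpace 𝕜 F]
  {G : Type*} [NormedAddCommGroup G] [NormedSpace 𝕜 G]

-- Neither lemma needs differentiability: otherwise `fderiv` is `0`.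
theorem fderiv_apply_eq_zero_of_forall_add_smul {f : E → F} {x v : E}
    (h : ∀ t : 𝕜, f (x + t • v) = f x) : fderiv 𝕜 f x v = 0 := by
  by_cases hf : DifferentiableAt 𝕜 f x
  · rw [← hf.lineDeriv_eq_fderiv, lineDeriv, funext h, deriv_const]
  · rw [fderiv_zero_of_not_differentiableAt hf, zero_apply]

theorem ContinuousLinearMap.map_fderiv_apply_eq_zero (L : F →L[𝕜] G) {f : E → F}
    (h : ∀ x, L (f x) = 0) (x v : E) : L (fderiv 𝕜 f x v) = 0 := by
  by_cases hf : DifferentiableAt 𝕜 f x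
  · have hLf : HasFDerivAt (fun y => L (f y)) (L.comp (fderiv 𝕜 f x)) x :=
      L.hasFDerivAt.comp x hf.hasFDerivAt
    simp only [h] at hLf
    exact congrArg (· v) (hLf.unique (hasFDerivAt_const 0 x))
  · rw [fderiv_zero_of_not_differentiableAt hf, zero_apply, map_zero]

end Calculus

theorem abs_mul_cos_le (a x : ℝ) : |a * Real.cos x| ≤ |a| := by
  rw [abs_mul]
  exact mul_le_of_le_one_right (abs_nonneg a) (Real.abs_cos_le_one x)

theorem vIdx_ne_seven (j : Fin 3) : vIdx j ≠ 7 := by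
  revert j; decide

theorem hIdx_ne_seven (k : Fin 3) : hIdx k ≠ 7 := by
  revert k; decide

theorem Ahat_apply_seven (Hh : Fin 3 → ℝ) (j : Fin 3) (i : Fin 8) : Ahat Hh j i 7 = 0 := by
  simp [Ahat, Matrix.single, Matrix.sum_apply, vIdx_ne_seven, hIdx_ne_seven]

theorem Ahat_mulVec_single_seven (Hh : Fin 3 → ℝ) (j : Fin 3) (x : ℝ) :
    (Ahat Hh j).mulVec (Pi.single 7 x) = 0 := by
  ext i
  simp [Matrix.mulVec_single, Ahat_apply_seven]

section Modes

variable (Sb φb ω₂ ω₃ : ℝ)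

theorem Uosc_eq_single (p : P3) :
    Uosc Sb ω₂ ω₃ p = Pi.single 7 (Sb * Real.cos (ω₂ * p.2.2.1 + ω₃ * p.2.2.2)) := by
  ext i
  by_cases hi : i = 7 <;> simp [Uosc, hi]

theorem Uosc_apply_of_ne {i : Fin 8} (hi : i ≠ 7) (p : P3) : Uosc Sb ω₂ ω₃ p i = 0 := by
  simp [Uosc, hi]

theorem abs_Uosc_le (p : P3) (i : Fin 8) : |Uosc Sb ω₂ ω₃ p i| ≤ |Sb| := by
  by_cases hi : i = 7
  · simpa [Uosc, hi] using abs_mul_cos_le Sb _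
  · simp [Uosc, hi]

theorem abs_φosc_le (q : ℝ × ℝ × ℝ) : |φosc φb ω₂ ω₃ q| ≤ |φb| :=
  abs_mul_cos_le φb _

theorem D_time_Uosc (p : P3) : D (1, 0, 0, 0) (Uosc Sb ω₂ ω₃) p = 0 :=
  fderiv_apply_eq_zero_of_forall_add_smul fun t => by ext i; simp [Uosc]

theorem fderiv_time_φosc (q : ℝ × ℝ × ℝ) : fderiv ℝ (φosc φb ω₂ ω₃) q (1, 0, 0) = 0 :=
  fderiv_apply_eq_zero_of_forall_add_smul fun t => by simp [φosc]

theorem Ahat_mulVec_D_Uosc (Hh : Fin 3 → ℝ) (j : Fin 3) (v p : P3) :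
    (Ahat Hh j).mulVec (D v (Uosc Sb ω₂ ω₃) p) = 0 :=
  (Matrix.mulVecLin (Ahat Hh j)).toContinuousLinearMap.map_fderiv_apply_eq_zero
    (fun p => by
      rw [LinearMap.coe_toContinuousLinearMap', Matrix.mulVecLin_apply, Uosc_eq_single,
        Ahat_mulVec_single_seven]) p v

end Modes

theorem neutral_modes_general
    (ρp ρm cp cm : ℝ)
    (Hh : Fin 3 → ℝ) (ω₂ ω₃ φb Sbp Sbm : ℝ) :
    -- interior equations in ℝ × ℝ³₊
    (∀ p : P3, 0 < p.2.1 →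
      (A0hat ρp cp).mulVec (D (1, 0, 0, 0) (Uosc Sbp ω₂ ω₃) p)
        + (Ahat Hh 0).mulVec (D (0, 1, 0, 0) (Uosc Sbp ω₂ ω₃) p)
        + (Ahat Hh 1).mulVec (D (0, 0, 1, 0) (Uosc Sbp ω₂ ω₃) p)
        + (Ahat Hh 2).mulVec (D (0, 0, 0, 1) (Uosc Sbp ω₂ ω₃) p) = 0) ∧
    (∀ p : P3, 0 < p.2.1 →
      (A0hat ρm cm).mulVec (D (1, 0, 0, 0) (Uosc Sbm ω₂ ω₃) p)
        - (Ahat Hh 0).mulVec (D (0, 1, 0, 0) (Uosc Sbm ω₂ ω₃) p)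
        + (Ahat Hh 1).mulVec (D (0, 0, 1, 0) (Uosc Sbm ω₂ ω₃) p)
        + (Ahat Hh 2).mulVec (D (0, 0, 0, 1) (Uosc Sbm ω₂ ω₃) p) = 0) ∧
    -- boundary conditions [p]=0, [v]=0, [H₂]=0, [H₃]=0, ∂ₜφ − v₁⁺|_{x₁=0} = 0
    (∀ t x₂ x₃ : ℝ,
      Uosc Sbp ω₂ ω₃ (t, 0, x₂, x₃) 0 = Uosc Sbm ω₂ ω₃ (t, 0, x₂, x₃) 0 ∧
      (∀ j : Fin 3,
        Uosc Sbp ω₂ ω₃ (t, 0, x₂, x₃) (vIdx j) =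
          Uosc Sbm ω₂ ω₃ (t, 0, x₂, x₃) (vIdx j)) ∧
      Uosc Sbp ω₂ ω₃ (t, 0, x₂, x₃) (hIdx 1) = Uosc Sbm ω₂ ω₃ (t, 0, x₂, x₃) (hIdx 1) ∧
      Uosc Sbp ω₂ ω₃ (t, 0, x₂, x₃) (hIdx 2) = Uosc Sbm ω₂ ω₃ (t, 0, x₂, x₃) (hIdx 2) ∧
      fderiv ℝ (φosc φb ω₂ ω₃) (t, x₂, x₃) (1, 0, 0)
        - Uosc Sbp ω₂ ω₃ (t, 0, x₂, x₃) (vIdx 0) = 0) ∧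
    -- boundedness
    ((∀ q : ℝ × ℝ × ℝ, |φosc φb ω₂ ω₃ q| ≤ |φb|) ∧
      (∀ (p : P3) (i : Fin 8), |Uosc Sbp ω₂ ω₃ p i| ≤ |Sbp|) ∧
      (∀ (p : P3) (i : Fin 8), |Uosc Sbm ω₂ ω₃ p i| ≤ |Sbm|)) ∧
    -- nontriviality
    (¬(φb = 0 ∧ Sbp = 0 ∧ Sbm = 0) →
      ¬((∀ q, φosc φb ω₂ ω₃ q = 0) ∧ (∀ p, Uosc Sbp ω₂ ω₃ p = 0) ∧
          (∀ p, Uosc Sbm ω₂ ω₃ p = 0))) := by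
  have hp0 : (0 : Fin 8) ≠ 7 := by decide
  refine ⟨fun p _ => ?_, fun p _ => ?_, fun t x₂ x₃ => ?_, ?_, ?_⟩
  · simp only [D_time_Uosc, Ahat_mulVec_D_Uosc, Matrix.mulVec_zero, add_zero]
  · simp only [D_time_Uosc, Ahat_mulVec_D_Uosc, Matrix.mulVec_zero, add_zero, sub_zero]
  · simp only [Uosc_apply_of_ne _ _ _ hp0, Uosc_apply_of_ne _ _ _ (vIdx_ne_seven _),
      Uosc_apply_of_ne _ _ _ (hIdx_ne_seven _), fderiv_time_φosc, sub_zero, and_self,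
      implies_true]
  · exact ⟨abs_φosc_le φb ω₂ ω₃, abs_Uosc_le Sbp ω₂ ω₃, abs_Uosc_le Sbm ω₂ ω₃⟩
  · rintro hne ⟨hφ, hUp, hUm⟩
    refine hne ⟨?_, ?_, ?_⟩
    · simpa [φosc] using hφ 0
    · simpa [Uosc] using congrFun (hUp 0) 7
    · simpa [Uosc] using congrFun (hUm 0) 7

/-- **Neutral modes associated with the non-elliptic front symbol.**
For every `ω = (ω₂,ω₃)` and constants `φ̄, S̄⁺, S̄⁻`, the time-independent
functions `φ = φ̄cos(ω₂x₂+ω₃x₃)` and `U± = (0,…,0,S̄±cos(ω₂x₂+ω₃x₃))` solve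
the homogeneous constant-coefficient problem; in particular if
`(φ̄,S̄⁺,S̄⁻) ≠ 0` the homogeneous problem admits nonzero bounded solutions. -/
theorem neutral_modes
    (ρp ρm cp cm : ℝ) (hρp : 0 < ρp) (hρm : 0 < ρm) (hcp : 0 < cp) (hcm : 0 < cm)
    (Hh : Fin 3 → ℝ) (ω₂ ω₃ φb Sbp Sbm : ℝ) :
    -- interior equations in ℝ × ℝ³₊
    (∀ p : P3, 0 < p.2.1 →
      (A0hat ρp cp).mulVec (D (1, 0, 0, 0) (Uosc Sbp ω₂ ω₃) p)
        + (Ahat Hh 0).mulVec (D (0, 1, 0, 0) (Uosc Sbp ω₂ ω₃) p)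
        + (Ahat Hh 1).mulVec (D (0, 0, 1, 0) (Uosc Sbp ω₂ ω₃) p)
        + (Ahat Hh 2).mulVec (D (0, 0, 0, 1) (Uosc Sbp ω₂ ω₃) p) = 0) ∧
    (∀ p : P3, 0 < p.2.1 →
      (A0hat ρm cm).mulVec (D (1, 0, 0, 0) (Uosc Sbm ω₂ ω₃) p)
        - (Ahat Hh 0).mulVec (D (0, 1, 0, 0) (Uosc Sbm ω₂ ω₃) p)
        + (Ahat Hh 1).mulVec (D (0, 0, 1, 0) (Uosc Sbm ω₂ ω₃) p)
        + (Ahat Hh 2).mulVec (D (0, 0, 0, 1) (Uosc Sbm ω₂ ω₃) p) = 0) ∧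
    -- boundary conditions [p]=0, [v]=0, [H₂]=0, [H₃]=0, ∂ₜφ − v₁⁺|_{x₁=0} = 0
    (∀ t x₂ x₃ : ℝ,
      Uosc Sbp ω₂ ω₃ (t, 0, x₂, x₃) 0 = Uosc Sbm ω₂ ω₃ (t, 0, x₂, x₃) 0 ∧
      (∀ j : Fin 3,
        Uosc Sbp ω₂ ω₃ (t, 0, x₂, x₃) (vIdx j) =
          Uosc Sbm ω₂ ω₃ (t, 0, x₂, x₃) (vIdx j)) ∧
      Uosc Sbp ω₂ ω₃ (t, 0, x₂, x₃) (hIdx 1) = Uosc Sbm ω₂ ω₃ (t, 0, x₂, x₃) (hIdx 1) ∧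
      Uosc Sbp ω₂ ω₃ (t, 0, x₂, x₃) (hIdx 2) = Uosc Sbm ω₂ ω₃ (t, 0, x₂, x₃) (hIdx 2) ∧
      fderiv ℝ (φosc φb ω₂ ω₃) (t, x₂, x₃) (1, 0, 0)
        - Uosc Sbp ω₂ ω₃ (t, 0, x₂, x₃) (vIdx 0) = 0) ∧
    -- boundedness
    ((∀ q : ℝ × ℝ × ℝ, |φosc φb ω₂ ω₃ q| ≤ |φb|) ∧
      (∀ (p : P3) (i : Fin 8), |Uosc Sbp ω₂ ω₃ p i| ≤ |Sbp|) ∧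
      (∀ (p : P3) (i : Fin 8), |Uosc Sbm ω₂ ω₃ p i| ≤ |Sbm|)) ∧
    -- nontriviality
    (¬(φb = 0 ∧ Sbp = 0 ∧ Sbm = 0) →
      ¬((∀ q, φosc φb ω₂ ω₃ q = 0) ∧ (∀ p, Uosc Sbp ω₂ ω₃ p = 0) ∧
          (∀ p, Uosc Sbm ω₂ ω₃ p = 0))) :=
  neutral_modes_general ρp ρm cp cm Hh ω₂ ω₃ φb Sbp Sbm

end
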